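/- Fix k and let X_j ∈ ℝ^{n×p_j} for all j, ξ > 0 and w_j'' > 0 for j ≠ k. Suppose the collection (Γ̂_j)_{j≠k}, with Γ̂_j ∈ ℝ^{p_j×p_k}, is a global minimizer of the objective (Γ_j)_{j≠k} ↦ (1/(2n))‖X_k − Σ_{j≠k} X_jΓ_j‖_F² + Σ_{j≠k} (ξ w_j''/√n) ‖X_jΓ_j‖_*. Let S_k = X_k − Σ_{j≠k} X_jΓ̂_j and for each j ≠ k let Q_j be the orthogonal projection matrix onto the column space of X_j. Then for every j ≠ k, d₁(Q_jS_k) ≤ √n ξ w_j''. -/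

import Mathlib

open Matrix

noncomputable def frobInner {m n : ℕ} (A B : Matrix (Fin m) (Fin n) ℝ) : ℝ := (Aᵀ * B).trace

noncomputable def frobNorm {m n : ℕ} (A : Matrix (Fin m) (Fin n) ℝ) : ℝ := Real.sqrt (Aᵀ * A).trace

/-- The positive semidefinite square root of a positive semidefinite matrix, as
`Matrix.PosSemidef.sqrt` was defined in the older Mathlib. -/
noncomputable def psdSqrt {n : ℕ} {M : Matrix (Fin n) (Fin n) ℝ} (hA : M.PosSemidef) :
    Matrix (Fin n) (Fin n) ℝ :=
  hA.1.eigenvectorUnitary.1 * diagonal ((↑) ∘ (Real.sqrt ∘ hA.1.eigenvalues)) *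
    (star hA.1.eigenvectorUnitary : Matrix (Fin n) (Fin n) ℝ)

noncomputable def nucNorm {m n : ℕ} (A : Matrix (Fin m) (Fin n) ℝ) : ℝ :=
  (psdSqrt (Matrix.posSemidef_conjTranspose_mul_self A)).trace

noncomputable def opNorm {m n : ℕ} (A : Matrix (Fin m) (Fin n) ℝ) : ℝ :=
  ‖LinearMap.toContinuousLinearMap (Matrix.toEuclideanLin A)‖

/-!
Perturb the `j`-th block of the minimizer by `t • M (u xᵀ)`, where `Q_j = X_j M` and
`u = Q_j S_k x`: this moves `X_j Γ_j` by the rank-one matrix `t • u xᵀ` and leaves the other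
blocks alone. Comparing objectives with the triangle inequality for the nuclear norm and letting
`t → 0⁺` gives `⟨S_k, u xᵀ⟩ ≤ √n ξ w_j ‖u xᵀ‖_* ≤ √n ξ w_j ‖u‖ ‖x‖`, while `⟨S_k, u xᵀ⟩ = ‖u‖²`
because `Q_j` is a symmetric idempotent; hence `‖Q_j S_k x‖ ≤ √n ξ w_j ‖x‖`.
The nuclear-norm facts all come from the duality `⟨A, B⟩ ≤ d₁(B) ‖A‖_*`, with equality at the
polar factor of `A`.
-/

section Frobenius

variable {m n : ℕ}

lemma frobInner_eq_sum_dotProduct (A B : Matrix (Fin m) (Fin n) ℝ) :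
    frobInner A B = ∑ j, Aᵀ j ⬝ᵥ Bᵀ j := by
  simp [frobInner, Matrix.trace, Matrix.mul_apply, dotProduct]

lemma frobInner_comm (A B : Matrix (Fin m) (Fin n) ℝ) : frobInner A B = frobInner B A := by
  rw [frobInner, frobInner, ← trace_transpose, transpose_mul, transpose_transpose]

lemma frobInner_add_left (A C B : Matrix (Fin m) (Fin n) ℝ) :
    frobInner (A + C) B = frobInner A B + frobInner C B := by
  simp [frobInner, Matrix.add_mul, trace_add]

lemma frobInner_smul_left (t : ℝ) (A B : Matrix (Fin m) (Fin n) ℝ) :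
    frobInner (t • A) B = t * frobInner A B := by
  simp [frobInner, trace_smul]

lemma frobInner_sub_left (A C B : Matrix (Fin m) (Fin n) ℝ) :
    frobInner (A - C) B = frobInner A B - frobInner C B := by
  simp [frobInner, Matrix.sub_mul, trace_sub]

lemma frobInner_smul_right (t : ℝ) (A B : Matrix (Fin m) (Fin n) ℝ) :
    frobInner A (t • B) = t * frobInner A B := by
  rw [frobInner_comm, frobInner_smul_left, frobInner_comm]

lemma frobNorm_sq (A : Matrix (Fin m) (Fin n) ℝ) : frobNorm A ^ 2 = frobInner A A := by
  refine Real.sq_sqrt ?_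
  rw [← frobInner, frobInner_eq_sum_dotProduct]
  exact Finset.sum_nonneg fun j _ => by simpa using dotProduct_self_star_nonneg (Aᵀ j)

lemma frobNorm_sub_smul_sq (S B : Matrix (Fin m) (Fin n) ℝ) (t : ℝ) :
    frobNorm (S - t • B) ^ 2 =
      frobNorm S ^ 2 - 2 * t * frobInner S B + t ^ 2 * frobNorm B ^ 2 := by
  simp only [frobNorm_sq, frobInner_sub_left, frobInner_comm _ (S - t • B), frobInner_smul_left,
    frobInner_smul_right, frobInner_comm B S]
  ring

lemma frobInner_mul_orthogonal {V : Matrix (Fin n) (Fin n) ℝ} (hV : V * Vᵀ = 1)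
    (A B : Matrix (Fin m) (Fin n) ℝ) : frobInner (A * V) (B * V) = frobInner A B := by
  rw [frobInner, frobInner, transpose_mul, Matrix.mul_assoc, ← Matrix.mul_assoc Aᵀ,
    trace_mul_comm, Matrix.mul_assoc, hV, Matrix.mul_one]

lemma frobInner_vecMulVec (S : Matrix (Fin m) (Fin n) ℝ) (u : Fin m → ℝ) (x : Fin n → ℝ) :
    frobInner S (vecMulVec u x) = u ⬝ᵥ S *ᵥ x := by
  simp only [frobInner, Matrix.trace, Matrix.diag, Matrix.mul_apply, transpose_apply,
    vecMulVec_apply, dotProduct, mulVec, Finset.mul_sum]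
  rw [Finset.sum_comm]
  exact Finset.sum_congr rfl fun a _ => Finset.sum_congr rfl fun i _ => by ring

end Frobenius

section EuclideanNorm

variable {m n : ℕ}

lemma norm_toLp_sq (v : Fin n → ℝ) : ‖WithLp.toLp 2 v‖ ^ 2 = v ⬝ᵥ v := by
  rw [EuclideanSpace.real_norm_sq_eq]; simp [dotProduct, sq]

lemma dotProduct_le_norm_mul_norm (v w : Fin n → ℝ) :
    v ⬝ᵥ w ≤ ‖WithLp.toLp 2 v‖ * ‖WithLp.toLp 2 w‖ := by
  simpa [EuclideanSpace.inner_toLp_toLp, dotProduct_comm] using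
    real_inner_le_norm (WithLp.toLp 2 v) (WithLp.toLp 2 w)

lemma norm_mulVec_le_opNorm (A : Matrix (Fin m) (Fin n) ℝ) (x : Fin n → ℝ) :
    ‖WithLp.toLp 2 (A *ᵥ x)‖ ≤ opNorm A * ‖WithLp.toLp 2 x‖ :=
  (LinearMap.toContinuousLinearMap (toEuclideanLin A)).le_opNorm (WithLp.toLp 2 x)

lemma opNorm_le_of_forall {A : Matrix (Fin m) (Fin n) ℝ} {c : ℝ} (hc : 0 ≤ c)
    (h : ∀ x, ‖WithLp.toLp 2 (A *ᵥ x)‖ ≤ c * ‖WithLp.toLp 2 x‖) : opNorm A ≤ c :=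
  ContinuousLinearMap.opNorm_le_bound _ hc fun x => h x.ofLp

lemma norm_mulVec_sq (M : Matrix (Fin m) (Fin n) ℝ) (x : Fin n → ℝ) :
    ‖WithLp.toLp 2 (M *ᵥ x)‖ ^ 2 = x ⬝ᵥ (Mᵀ * M) *ᵥ x := by
  rw [norm_toLp_sq, ← mulVec_mulVec, dotProduct_mulVec x, vecMul_transpose]

lemma norm_mulVec_le_of_transpose_mul_self_eq_diagonal {M : Matrix (Fin m) (Fin n) ℝ}
    {e : Fin n → ℝ} (hM : Mᵀ * M = diagonal e) (he : ∀ i, e i ≤ 1) (x : Fin n → ℝ) :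
    ‖WithLp.toLp 2 (M *ᵥ x)‖ ≤ ‖WithLp.toLp 2 x‖ := by
  refine (pow_le_pow_iff_left₀ (norm_nonneg _) (norm_nonneg _) two_ne_zero).mp ?_
  rw [norm_mulVec_sq, hM, norm_toLp_sq]
  simp only [dotProduct, mulVec_diagonal]
  exact Finset.sum_le_sum fun i _ => by
    nlinarith [he i, mul_self_nonneg (x i)]

end EuclideanNorm

section SingularValues

variable {m n : ℕ}

noncomputable def rightSingularVectors (A : Matrix (Fin m) (Fin n) ℝ) :
    Matrix (Fin n) (Fin n) ℝ :=
  (posSemidef_conjTranspose_mul_self A).1.eigenvectorUnitary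

noncomputable def singularValues (A : Matrix (Fin m) (Fin n) ℝ) (i : Fin n) : ℝ :=
  √((posSemidef_conjTranspose_mul_self A).1.eigenvalues i)

lemma rightSingularVectors_transpose_mul_self (A : Matrix (Fin m) (Fin n) ℝ) :
    (rightSingularVectors A)ᵀ * rightSingularVectors A = 1 :=
  Unitary.coe_star_mul_self (posSemidef_conjTranspose_mul_self A).1.eigenvectorUnitary

lemma rightSingularVectors_mul_transpose_self (A : Matrix (Fin m) (Fin n) ℝ) :
    rightSingularVectors A * (rightSingularVectors A)ᵀ = 1 :=
  Unitary.coe_mul_star_self (posSemidef_conjTranspose_mul_self A).1.eigenvectorUnitary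

lemma transpose_mul_self_mul_rightSingularVectors (A : Matrix (Fin m) (Fin n) ℝ) :
    (A * rightSingularVectors A)ᵀ * (A * rightSingularVectors A) =
      diagonal fun i => singularValues A i ^ 2 := by
  have hA := posSemidef_conjTranspose_mul_self A
  have h := hA.1.conjStarAlgAut_star_eigenvectorUnitary
  rw [Unitary.conjStarAlgAut_apply, Unitary.coe_star, star_star] at h
  simp only [singularValues, Real.sq_sqrt (hA.eigenvalues_nonneg _)]
  convert h using 1
  · rw [transpose_mul, ← conjTranspose_eq_transpose_of_trivial A]
    simp only [Matrix.mul_assoc]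
    rfl
  · rfl

lemma singularValues_nonneg (A : Matrix (Fin m) (Fin n) ℝ) (i : Fin n) :
    0 ≤ singularValues A i :=
  Real.sqrt_nonneg _

lemma nucNorm_eq_sum_singularValues (A : Matrix (Fin m) (Fin n) ℝ) :
    nucNorm A = ∑ i, singularValues A i := by
  rw [nucNorm, psdSqrt, trace_mul_cycle, ← rightSingularVectors, star_eq_conjTranspose,
    conjTranspose_eq_transpose_of_trivial, rightSingularVectors_transpose_mul_self,
    Matrix.one_mul, trace_diagonal]
  rfl

lemma nucNorm_nonneg (A : Matrix (Fin m) (Fin n) ℝ) : 0 ≤ nucNorm A := by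
  rw [nucNorm_eq_sum_singularValues]
  exact Finset.sum_nonneg fun i _ => singularValues_nonneg A i

end SingularValues

section NuclearNormDuality

variable {m n : ℕ}

lemma norm_transpose_apply_sq (M : Matrix (Fin m) (Fin n) ℝ) (j : Fin n) :
    ‖WithLp.toLp 2 (Mᵀ j)‖ ^ 2 = (Mᵀ * M) j j := by
  rw [norm_toLp_sq, mul_apply']
  rfl

lemma transpose_mul_apply_eq_mulVec {l : ℕ} (B : Matrix (Fin m) (Fin n) ℝ)
    (V : Matrix (Fin n) (Fin l) ℝ) (j : Fin l) : (B * V)ᵀ j = B *ᵥ Vᵀ j := by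
  ext a
  simp [mul_apply, mulVec, dotProduct]

lemma frobInner_le_opNorm_mul_nucNorm (A B : Matrix (Fin m) (Fin n) ℝ) :
    frobInner A B ≤ opNorm B * nucNorm A := by
  set V := rightSingularVectors A
  have hAV : ∀ j, ‖WithLp.toLp 2 ((A * V)ᵀ j)‖ = singularValues A j := fun j => by
    rw [← sq_eq_sq₀ (norm_nonneg _) (singularValues_nonneg A j), norm_transpose_apply_sq,
      transpose_mul_self_mul_rightSingularVectors, diagonal_apply_eq]
  have hV : ∀ j, ‖WithLp.toLp 2 (Vᵀ j)‖ = 1 := fun j => by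
    rw [← sq_eq_sq₀ (norm_nonneg _) zero_le_one, one_pow, norm_transpose_apply_sq,
      rightSingularVectors_transpose_mul_self, one_apply_eq]
  rw [← frobInner_mul_orthogonal (rightSingularVectors_mul_transpose_self A),
    frobInner_eq_sum_dotProduct, nucNorm_eq_sum_singularValues, Finset.mul_sum]
  refine Finset.sum_le_sum fun j _ => ?_
  calc (A * V)ᵀ j ⬝ᵥ (B * V)ᵀ j
      ≤ ‖WithLp.toLp 2 ((A * V)ᵀ j)‖ * ‖WithLp.toLp 2 ((B * V)ᵀ j)‖ :=
        dotProduct_le_norm_mul_norm _ _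
    _ ≤ singularValues A j * opNorm B := by
        rw [hAV, transpose_mul_apply_eq_mulVec]
        refine mul_le_mul_of_nonneg_left ?_ (singularValues_nonneg A j)
        simpa [hV] using norm_mulVec_le_opNorm B (Vᵀ j)
    _ = opNorm B * singularValues A j := mul_comm _ _

lemma exists_opNorm_le_one_frobInner_eq_nucNorm (A : Matrix (Fin m) (Fin n) ℝ) :
    ∃ U : Matrix (Fin m) (Fin n) ℝ, opNorm U ≤ 1 ∧ frobInner A U = nucNorm A := by
  set V := rightSingularVectors A
  set σ := singularValues A
  have hVV : V * Vᵀ = 1 := rightSingularVectors_mul_transpose_self A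
  have hAV : (A * V)ᵀ * (A * V) = diagonal fun i => σ i ^ 2 :=
    transpose_mul_self_mul_rightSingularVectors A
  -- `σ⁻¹` is the pseudo-inverse of `σ` since `0⁻¹ = 0`, so `W * Vᵀ` is the polar factor of `A`.
  set W := A * V * diagonal σ⁻¹
  refine ⟨W * Vᵀ, opNorm_le_of_forall zero_le_one fun x => ?_, ?_⟩
  · have hW : Wᵀ * W = diagonal fun i => σ⁻¹ i * σ i ^ 2 * σ⁻¹ i := by
      calc Wᵀ * W = diagonal σ⁻¹ * ((A * V)ᵀ * (A * V)) * diagonal σ⁻¹ := by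
            simp only [W, transpose_mul, diagonal_transpose, Matrix.mul_assoc]
        _ = _ := by rw [hAV, diagonal_mul_diagonal, diagonal_mul_diagonal]
    have hWle : ∀ i, σ⁻¹ i * σ i ^ 2 * σ⁻¹ i ≤ 1 := fun i => by
      by_cases hσ : σ i = 0
      · simp [hσ]
      · simp only [Pi.inv_apply]
        field_simp
        rfl
    have hVt : (Vᵀ)ᵀ * Vᵀ = diagonal fun _ => 1 := by rw [transpose_transpose, hVV, diagonal_one]
    rw [one_mul, ← mulVec_mulVec]
    calc ‖WithLp.toLp 2 (W *ᵥ Vᵀ *ᵥ x)‖ ≤ ‖WithLp.toLp 2 (Vᵀ *ᵥ x)‖ :=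
          norm_mulVec_le_of_transpose_mul_self_eq_diagonal hW hWle _
      _ ≤ ‖WithLp.toLp 2 x‖ :=
          norm_mulVec_le_of_transpose_mul_self_eq_diagonal hVt (fun _ => le_rfl) _
  · rw [← frobInner_mul_orthogonal hVV, Matrix.mul_assoc W,
      rightSingularVectors_transpose_mul_self, Matrix.mul_one, frobInner, ← Matrix.mul_assoc,
      hAV, diagonal_mul_diagonal, trace_diagonal, nucNorm_eq_sum_singularValues]
    change _ = ∑ i, σ i
    refine Finset.sum_congr rfl fun i _ => ?_
    by_cases hσ : σ i = 0
    · simp [hσ]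
    · simp only [Pi.inv_apply]
      field_simp

lemma frobInner_le_nucNorm_of_opNorm_le_one {U : Matrix (Fin m) (Fin n) ℝ} (hU : opNorm U ≤ 1)
    (A : Matrix (Fin m) (Fin n) ℝ) : frobInner A U ≤ nucNorm A :=
  (frobInner_le_opNorm_mul_nucNorm A U).trans (mul_le_of_le_one_left (nucNorm_nonneg A) hU)

lemma nucNorm_le_of_forall_frobInner_le {A : Matrix (Fin m) (Fin n) ℝ} {c : ℝ}
    (h : ∀ U, opNorm U ≤ 1 → frobInner A U ≤ c) : nucNorm A ≤ c := by
  obtain ⟨U, hU, hAU⟩ := exists_opNorm_le_one_frobInner_eq_nucNorm A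
  exact hAU ▸ h U hU

lemma nucNorm_add_le (A C : Matrix (Fin m) (Fin n) ℝ) :
    nucNorm (A + C) ≤ nucNorm A + nucNorm C :=
  nucNorm_le_of_forall_frobInner_le fun U hU => by
    rw [frobInner_add_left]
    exact add_le_add (frobInner_le_nucNorm_of_opNorm_le_one hU A)
      (frobInner_le_nucNorm_of_opNorm_le_one hU C)

lemma nucNorm_smul_le {t : ℝ} (ht : 0 ≤ t) (A : Matrix (Fin m) (Fin n) ℝ) :
    nucNorm (t • A) ≤ t * nucNorm A :=
  nucNorm_le_of_forall_frobInner_le fun U hU => by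
    rw [frobInner_smul_left]
    exact mul_le_mul_of_nonneg_left (frobInner_le_nucNorm_of_opNorm_le_one hU A) ht

lemma nucNorm_vecMulVec_le (u : Fin m → ℝ) (x : Fin n → ℝ) :
    nucNorm (vecMulVec u x) ≤ ‖WithLp.toLp 2 u‖ * ‖WithLp.toLp 2 x‖ :=
  nucNorm_le_of_forall_frobInner_le fun U hU => by
    rw [frobInner_comm, frobInner_vecMulVec]
    refine (dotProduct_le_norm_mul_norm u (U *ᵥ x)).trans ?_
    refine mul_le_mul_of_nonneg_left ?_ (norm_nonneg _)
    exact (norm_mulVec_le_opNorm U x).trans (mul_le_of_le_one_left (norm_nonneg _) hU)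

end NuclearNormDuality

lemma le_of_forall_pos_le_add_mul {a b c : ℝ} (h : ∀ t : ℝ, 0 < t → a ≤ b + t * c) : a ≤ b := by
  refine le_of_forall_pos_le_add fun ε hε => (h _ (by positivity : 0 < ε / (|c| + 1))).trans ?_
  gcongr
  calc ε / (|c| + 1) * c ≤ ε / (|c| + 1) * (|c| + 1) := by
        gcongr
        linarith [le_abs_self c]
    _ = ε := div_mul_cancel₀ _ (by positivity)

lemma frobInner_le_mul_nucNorm_of_forall_pos_le {m n : ℕ} {S A B : Matrix (Fin m) (Fin n) ℝ}
    {N lam : ℝ} (hN : 0 < N) (hlam : 0 ≤ lam)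
    (h : ∀ t : ℝ, 0 < t → 1 / (2 * N) * frobNorm S ^ 2 + lam * nucNorm A ≤
      1 / (2 * N) * frobNorm (S - t • B) ^ 2 + lam * nucNorm (A + t • B)) :
    frobInner S B ≤ N * lam * nucNorm B := by
  refine le_of_forall_pos_le_add_mul (c := frobNorm B ^ 2 / 2) fun t ht => ?_
  have hobj := h t ht
  have hnuc : nucNorm (A + t • B) ≤ nucNorm A + t * nucNorm B :=
    (nucNorm_add_le A (t • B)).trans (add_le_add le_rfl (nucNorm_smul_le ht.le B))
  have hpen := mul_le_mul_of_nonneg_left hnuc hlam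
  rw [frobNorm_sub_smul_sq] at hobj
  have hdir : 0 ≤ 1 / (2 * N) * (t ^ 2 * frobNorm B ^ 2 - 2 * t * frobInner S B) +
      lam * (t * nucNorm B) := by linarith
  have hscaled : t * frobInner S B ≤ t * (N * lam * nucNorm B + t * (frobNorm B ^ 2 / 2)) := by
    have := mul_nonneg hN.le hdir
    field_simp at this
    nlinarith
  exact le_of_mul_le_mul_left hscaled ht

lemma Finset.sum_update_eq_add_sum_erase {ι M : Type*} [DecidableEq ι] [AddCommMonoid M]
    {β : ι → Type*} {s : Finset ι} {j : ι} (hj : j ∈ s) (g : ∀ i, β i) (v : β j)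
    (f : ∀ i, β i → M) :
    ∑ i ∈ s, f i (Function.update g j v i) = f j v + ∑ i ∈ s.erase j, f i (g i) := by
  rw [← Finset.add_sum_erase s _ hj, Function.update_self]
  congr 1
  exact Finset.sum_congr rfl fun i hi => by
    rw [Function.update_of_ne (Finset.ne_of_mem_erase hi)]

lemma block_objective_le_of_isMin {ι : Type*} [DecidableEq ι] {n r : ℕ} {p : ι → ℕ}
    {s : Finset ι} {N : ℝ} {lam : ι → ℝ} {Y : Matrix (Fin n) (Fin r) ℝ}
    {X : ∀ i, Matrix (Fin n) (Fin (p i)) ℝ} {Γ : ∀ i, Matrix (Fin (p i)) (Fin r) ℝ}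
    (hmin : ∀ Γ' : ∀ i, Matrix (Fin (p i)) (Fin r) ℝ,
      1 / (2 * N) * frobNorm (Y - ∑ i ∈ s, X i * Γ i) ^ 2 +
          ∑ i ∈ s, lam i * nucNorm (X i * Γ i) ≤
        1 / (2 * N) * frobNorm (Y - ∑ i ∈ s, X i * Γ' i) ^ 2 +
          ∑ i ∈ s, lam i * nucNorm (X i * Γ' i))
    {j : ι} (hj : j ∈ s) (Δ : Matrix (Fin (p j)) (Fin r) ℝ) :
    1 / (2 * N) * frobNorm (Y - ∑ i ∈ s, X i * Γ i) ^ 2 + lam j * nucNorm (X j * Γ j) ≤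
      1 / (2 * N) * frobNorm (Y - ∑ i ∈ s, X i * Γ i - X j * Δ) ^ 2 +
        lam j * nucNorm (X j * Γ j + X j * Δ) := by
  have h := hmin (Function.update Γ j (Γ j + Δ))
  rw [Finset.sum_update_eq_add_sum_erase hj Γ _ fun i G => X i * G,
    Finset.sum_update_eq_add_sum_erase hj Γ _ fun i G => lam i * nucNorm (X i * G),
    ← Finset.add_sum_erase s _ hj, ← Finset.add_sum_erase s (fun i => lam i * nucNorm _) hj] at h
  rw [← Finset.add_sum_erase s _ hj]
  simp only [Matrix.mul_add] at h
  have hres : Y - (X j * Γ j + X j * Δ + ∑ i ∈ s.erase j, X i * Γ i) =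
      Y - (X j * Γ j + ∑ i ∈ s.erase j, X i * Γ i) - X j * Δ := by abel
  rw [hres] at h
  linarith

theorem stmt_14_general (n K : ℕ) (hn : 0 < n) (p : Fin K → ℕ) (k : Fin K)
    (X : ∀ j, Matrix (Fin n) (Fin (p j)) ℝ)
    (ξ : ℝ) (hξ : 0 < ξ) (w : Fin K → ℝ) (hw : ∀ j, 0 < w j)
    (Γhat : ∀ j, Matrix (Fin (p j)) (Fin (p k)) ℝ)
    (hmin : ∀ Γ : ∀ j, Matrix (Fin (p j)) (Fin (p k)) ℝ,
      (1 / (2 * n)) *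
          (frobNorm (X k - ∑ j ∈ Finset.univ.erase k, X j * Γhat j)) ^ 2 +
          ∑ j ∈ Finset.univ.erase k,
            (ξ * w j / Real.sqrt n) * nucNorm (X j * Γhat j) ≤
        (1 / (2 * n)) *
            (frobNorm (X k - ∑ j ∈ Finset.univ.erase k, X j * Γ j)) ^ 2 +
          ∑ j ∈ Finset.univ.erase k,
            (ξ * w j / Real.sqrt n) * nucNorm (X j * Γ j))
    (Q : Fin K → Matrix (Fin n) (Fin n) ℝ)
    (hQsym : ∀ j, (Q j)ᵀ = Q j) (hQidem : ∀ j, Q j * Q j = Q j)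
    (hQrange : ∀ j, ∃ M : Matrix (Fin (p j)) (Fin n) ℝ, Q j = X j * M) :
    ∀ j ∈ Finset.univ.erase k,
      opNorm (Q j * (X k - ∑ i ∈ Finset.univ.erase k, X i * Γhat i)) ≤
        Real.sqrt n * ξ * w j := by
  intro j hj
  obtain ⟨M, hM⟩ := hQrange j
  set S := X k - ∑ i ∈ Finset.univ.erase k, X i * Γhat i
  have hw0 := (hw j).le
  have hlam : 0 ≤ ξ * w j / √n := by positivity
  refine opNorm_le_of_forall (by positivity) fun x => ?_
  set u := (Q j * S) *ᵥ x
  have hQu : Q j *ᵥ u = u := by rw [mulVec_mulVec, ← Matrix.mul_assoc, hQidem]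
  have hXB : X j * (M * vecMulVec u x) = vecMulVec u x := by
    rw [← Matrix.mul_assoc, ← hM, mul_vecMulVec, hQu]
  have hSB : frobInner S (vecMulVec u x) = ‖WithLp.toLp 2 u‖ ^ 2 := by
    rw [frobInner_vecMulVec, norm_toLp_sq]
    conv_lhs => rw [← hQu, ← hQsym j, mulVec_transpose, ← dotProduct_mulVec, mulVec_mulVec]
  have hopt := frobInner_le_mul_nucNorm_of_forall_pos_le (Nat.cast_pos.mpr hn) hlam fun t _ => by
    simpa only [Matrix.mul_smul, hXB] using
      block_objective_le_of_isMin hmin hj (t • (M * vecMulVec u x))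
  have hc : (n : ℝ) * (ξ * w j / √n) = √n * ξ * w j := by
    have hsqrt : √(n : ℝ) ≠ 0 := by positivity
    field_simp
    rw [Real.sq_sqrt (Nat.cast_nonneg n)]
    ring
  rw [hSB, hc] at hopt
  have hsq := hopt.trans (mul_le_mul_of_nonneg_left (nucNorm_vecMulVec_le u x) (by positivity))
  have hc0 : 0 ≤ √n * ξ * w j * ‖WithLp.toLp 2 x‖ := by positivity
  nlinarith [norm_nonneg (WithLp.toLp 2 u)]

/-- KKT consequence of the nuclear-norm-penalized score regression: if `(Γ̂ⱼ)_{j≠k}` globally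
minimizes `(1/(2n))‖X_k − ∑_{j≠k} XⱼΓⱼ‖_F² + ∑_{j≠k} (ξwⱼ''/√n)‖XⱼΓⱼ‖_*`, and `Qⱼ` is the
orthogonal projection onto the column space of `Xⱼ`, then for every `j ≠ k`,
`d₁(QⱼS_k) ≤ √n ξ wⱼ''` where `S_k = X_k − ∑_{j≠k} XⱼΓ̂ⱼ`. -/
theorem stmt_14 (n K : ℕ) (hn : 0 < n) (p : Fin K → ℕ) (k : Fin K)
    (X : ∀ j, Matrix (Fin n) (Fin (p j)) ℝ)
    (ξ : ℝ) (hξ : 0 < ξ) (w : Fin K → ℝ) (hw : ∀ j, 0 < w j)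
    (Γhat : ∀ j, Matrix (Fin (p j)) (Fin (p k)) ℝ)
    (hmin : ∀ Γ : ∀ j, Matrix (Fin (p j)) (Fin (p k)) ℝ,
      (1 / (2 * n)) *
          (frobNorm (X k - ∑ j ∈ Finset.univ.erase k, X j * Γhat j)) ^ 2 +
          ∑ j ∈ Finset.univ.erase k,
            (ξ * w j / Real.sqrt n) * nucNorm (X j * Γhat j) ≤
        (1 / (2 * n)) *
            (frobNorm (X k - ∑ j ∈ Finset.univ.erase k, X j * Γ j)) ^ 2 +
          ∑ j ∈ Finset.univ.erase k,
            (ξ * w j / Real.sqrt n) * nucNorm (X j * Γ j))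
    (Q : Fin K → Matrix (Fin n) (Fin n) ℝ)
    (hQsym : ∀ j, (Q j)ᵀ = Q j) (hQidem : ∀ j, Q j * Q j = Q j)
    (hQX : ∀ j, Q j * X j = X j)
    (hQrange : ∀ j, ∃ M : Matrix (Fin (p j)) (Fin n) ℝ, Q j = X j * M) :
    ∀ j ∈ Finset.univ.erase k,
      opNorm (Q j * (X k - ∑ i ∈ Finset.univ.erase k, X i * Γhat i)) ≤
        Real.sqrt n * ξ * w j :=
  stmt_14_general n K hn p k X ξ hξ w hw Γhat hmin Q hQsym hQidem hQrange
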